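/- arXiv:2106.04743 — 6 statements merged into one kernel-verified Lean document; each statement's English description precedes it below -/
import Mathlib

section
/- Let f: E → ℝ be continuously differentiable and φ: E → ℝ be convex and continuously differentiable. If Lφ − f is convex for some L > 0, then for all x, y ∈ E, f(x) ≤ f(y) + ⟨∇f(y), x − y⟩ + L·D_φ(x,y), where D_φ is the Bregman distance of φ. -/
open Filter Topology

/-! The tangent-plane inequality for the convex function `L φ - f` at `y`, whose derivative is
`L ∇φ(y) - ∇f(y)`, rearranges to the claim. -/

/-- Bregman distance associated with `φ`. -/
noncomputable def Dphi {E : Type*} [NormedAddCommGroup E] [InnerProductSpace ℝ E]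
    [CompleteSpace E] (φ : E → ℝ) (x y : E) : ℝ :=
  φ x - φ y - (inner ℝ (gradient φ y) (x - y) : ℝ)

theorem ConvexOn.fderiv_apply_sub_le {E : Type*} [NormedAddCommGroup E] [NormedSpace ℝ E]
    {s : Set E} {g : E → ℝ} {g' : E →L[ℝ] ℝ} {x y : E} (hg : ConvexOn ℝ s g)
    (hx : x ∈ s) (hy : y ∈ s) (hd : HasFDerivAt g g' y) :
    g' (x - y) ≤ g x - g y := by
  set ℓ : ℝ →ᵃ[ℝ] E := AffineMap.lineMap y x
  have hconv : ConvexOn ℝ (ℓ ⁻¹' s) (g ∘ ℓ) := hg.comp_affineMap ℓ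
  have hderiv : HasDerivAt (g ∘ ℓ) (g' (x - y)) 0 :=
    (by simpa [ℓ] using hd : HasFDerivAt g g' (ℓ 0)).comp_hasDerivAt 0
      AffineMap.hasDerivAt_lineMap
  have slope_le := hconv.le_slope_of_hasDerivAt (by simpa [ℓ]) (by simpa [ℓ]) one_pos hderiv
  simpa [slope_def_field, ℓ] using slope_le

theorem stmt1_general {E : Type*} [NormedAddCommGroup E] [InnerProductSpace ℝ E]
    [FiniteDimensional ℝ E]
    (f φ : E → ℝ) (L : ℝ)
    (hf : ContDiff ℝ 1 f) (hφ : ContDiff ℝ 1 φ)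
    (hconv : ConvexOn ℝ Set.univ (fun x => L * φ x - f x)) :
    ∀ x y : E, f x ≤ f y + (inner ℝ (gradient f y) (x - y) : ℝ) + L * Dphi φ x y := by
  intro x y
  have hfd := (hf.differentiable one_ne_zero y).hasFDerivAt
  have hφd := (hφ.differentiable one_ne_zero y).hasFDerivAt
  have tangent := hconv.fderiv_apply_sub_le (Set.mem_univ x) (Set.mem_univ y)
    ((hφd.const_mul L).sub hfd)
  simp only [sub_apply, smul_apply, smul_eq_mul] at tangent
  rw [Dphi, inner_gradient_left, inner_gradient_left]
  linarith

theorem stmt1 {E : Type*} [NormedAddCommGroup E] [InnerProductSpace ℝ E]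
    [FiniteDimensional ℝ E]
    (f φ : E → ℝ) (L : ℝ) (hL : 0 < L)
    (hf : ContDiff ℝ 1 f) (hφ : ContDiff ℝ 1 φ) (hφconv : ConvexOn ℝ Set.univ φ)
    (hconv : ConvexOn ℝ Set.univ (fun x => L * φ x - f x)) :
    ∀ x y : E, f x ≤ f y + (inner ℝ (gradient f y) (x - y) : ℝ) + L * Dphi φ x y :=
  stmt1_general f φ L hf hφ hconv
end

section
/- Suppose F = f + g − h where f is continuously differentiable with Lφ − f and lφ + f convex (L > 0, l ≥ 0, φ strongly convex continuously differentiable), g is proper lower semicontinuous convex, h is convex. Let y ∈ E, ξ ∈ ∂h(x), and let x⁺ be a minimizer of z ↦ Lφ(z) + g(z) − ⟨L∇φ(y) − ∇f(y) + ξ, z⟩ over E. Then F(x⁺) ≤ F(x) + (L + l)·D_φ(x, y) − L·D_φ(x, x⁺). -/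
open Filter Topology

/-- Convex subdifferential of `h` at `x`. -/
def ConvexSubdiff {E : Type*} [NormedAddCommGroup E] [InnerProductSpace ℝ E]
    (h : E → ℝ) (x : E) : Set E :=
  {ξ | ∀ z, h x + (inner ℝ ξ (z - x) : ℝ) ≤ h z}

open Set

section

variable {E : Type*} [NormedAddCommGroup E] [NormedSpace ℝ E]

lemma ConvexOn.comp_add_smul {g : E → ℝ} (hg : ConvexOn ℝ univ g) (a d : E) :
    ConvexOn ℝ univ fun t : ℝ => g (a + t • d) := by
  refine ⟨convex_univ, fun s _ t _ p q hp hq hpq => ?_⟩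
  have hline : a + (p • s + q • t) • d = p • (a + s • d) + q • (a + t • d) := by
    linear_combination (norm := module) (-hpq) • a
  simpa only [hline] using hg.2 (mem_univ _) (mem_univ _) hp hq hpq

lemma ConvexOn.add_fderiv_sub_le {F : E → ℝ} {F' : E →L[ℝ] ℝ} {a : E}
    (hF : ConvexOn ℝ univ F) (hF' : HasFDerivAt F F' a) (b : E) :
    F a + F' (b - a) ≤ F b := by
  have h := (hF.comp_add_smul a (b - a)).le_slope_of_hasDerivAt (mem_univ 0) (mem_univ 1)
    zero_lt_one (hF'.hasLineDerivAt (b - a))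
  simp only [slope_def_field, sub_zero, div_one, zero_smul, add_zero, one_smul,
    add_sub_cancel] at h
  linarith

lemma sub_le_of_isMinOn_add_of_convexOn {u v : ℝ → ℝ} {u' : ℝ}
    (hmin : IsMinOn (fun t => u t + v t) univ 0) (hu : HasDerivAt u u' 0)
    (hv : ConvexOn ℝ univ v) : v 0 - v 1 ≤ u' := by
  refine ge_of_tendsto hu.tendsto_slope_zero_right ?_
  filter_upwards [Ioo_mem_nhdsGT (zero_lt_one' ℝ)] with t ht
  have hslope : slope v 0 t ≤ slope v 0 1 :=
    hv.monotoneOn_slope_gt (mem_univ 0) ⟨mem_univ t, ht.1⟩ ⟨mem_univ 1, zero_lt_one⟩ ht.2.le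
  have hopt : u 0 + v 0 ≤ u t + v t := isMinOn_univ_iff.1 hmin t
  simp only [slope_def_field, sub_zero, div_one] at hslope
  rw [div_le_iff₀ ht.1] at hslope
  rw [zero_add, smul_eq_mul, le_inv_mul_iff₀ ht.1]
  linarith

lemma ConvexOn.sub_le_fderiv_of_isMinOn_add {ψ g : E → ℝ} {ψ' : E →L[ℝ] ℝ} {a : E}
    (hmin : IsMinOn (fun z => ψ z + g z) univ a) (hψ : HasFDerivAt ψ ψ' a)
    (hg : ConvexOn ℝ univ g) (b : E) : g a - g b ≤ ψ' (b - a) := by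
  have h := sub_le_of_isMinOn_add_of_convexOn (u := fun t : ℝ => ψ (a + t • (b - a)))
    (v := fun t : ℝ => g (a + t • (b - a))) ?_ (hψ.hasLineDerivAt (b - a))
    (hg.comp_add_smul a (b - a))
  · simpa using h
  · exact isMinOn_univ_iff.2 fun t => by simpa using isMinOn_univ_iff.1 hmin (a + t • (b - a))

end

theorem stmt3_general {E : Type*} [NormedAddCommGroup E] [InnerProductSpace ℝ E]
    [FiniteDimensional ℝ E]
    (f g h φ : E → ℝ) (L l : ℝ)
    (hf : ContDiff ℝ 1 f) (hφ : ContDiff ℝ 1 φ)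
    (hLf : ConvexOn ℝ Set.univ (fun x => L * φ x - f x))
    (hlf : ConvexOn ℝ Set.univ (fun x => l * φ x + f x))
    (hg : ConvexOn ℝ Set.univ g)
    (x y xplus ξ : E) (hξ : ξ ∈ ConvexSubdiff h x)
    (hmin : ∀ z : E,
      L * φ xplus + g xplus
          - (inner ℝ (L • gradient φ y - gradient f y + ξ) xplus : ℝ)
        ≤ L * φ z + g z - (inner ℝ (L • gradient φ y - gradient f y + ξ) z : ℝ)) :
    f xplus + g xplus - h xplus
      ≤ (f x + g x - h x) + (L + l) * Dphi φ x y - L * Dphi φ x xplus := by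
  have hφ' (z : E) : HasFDerivAt φ (fderiv ℝ φ z) z :=
    (hφ.differentiable one_ne_zero z).hasFDerivAt
  have hf' : HasFDerivAt f (fderiv ℝ f y) y := (hf.differentiable one_ne_zero y).hasFDerivAt
  set v := L • gradient φ y - gradient f y + ξ
  have upper := hLf.add_fderiv_sub_le (((hφ' y).const_mul L).sub hf') xplus
  have lower := hlf.add_fderiv_sub_le (((hφ' y).const_mul l).add hf') x
  have optimality := hg.sub_le_fderiv_of_isMinOn_add (ψ := fun z => L * φ z - inner ℝ v z)
    (isMinOn_univ_iff.2 fun z => by linarith [hmin z])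
    (((hφ' xplus).const_mul L).sub (innerSL ℝ v).hasFDerivAt) x
  have subgradient := hξ xplus
  simp only [Dphi, v, sub_apply, add_apply, smul_apply, smul_eq_mul, ← inner_gradient_left,
    innerSL_apply_apply, inner_sub_left, inner_add_left, inner_sub_right, real_inner_smul_left]
    at upper lower optimality subgradient ⊢
  linear_combination upper + lower + optimality + subgradient

theorem stmt3 {E : Type*} [NormedAddCommGroup E] [InnerProductSpace ℝ E]
    [FiniteDimensional ℝ E]
    (f g h φ : E → ℝ) (L l ρ : ℝ) (hL : 0 < L) (hl : 0 ≤ l) (hρ : 0 < ρ)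
    (hf : ContDiff ℝ 1 f) (hφ : ContDiff ℝ 1 φ)
    (hφsc : ConvexOn ℝ Set.univ (fun x => φ x - ρ / 2 * ‖x‖ ^ 2))
    (hLf : ConvexOn ℝ Set.univ (fun x => L * φ x - f x))
    (hlf : ConvexOn ℝ Set.univ (fun x => l * φ x + f x))
    (hg : ConvexOn ℝ Set.univ g) (hglsc : LowerSemicontinuous g)
    (hh : ConvexOn ℝ Set.univ h)
    (x y xplus ξ : E) (hξ : ξ ∈ ConvexSubdiff h x)
    (hmin : ∀ z : E,
      L * φ xplus + g xplus
          - (inner ℝ (L • gradient φ y - gradient f y + ξ) xplus : ℝ)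
        ≤ L * φ z + g z - (inner ℝ (L • gradient φ y - gradient f y + ξ) z : ℝ)) :
    f xplus + g xplus - h xplus
      ≤ (f x + g x - h x) + (L + l) * Dphi φ x y - L * Dphi φ x xplus :=
  stmt3_general f g h φ L l hf hφ hLf hlf hg x y xplus ξ hξ hmin
end

section
/- Suppose Assumption: f continuously differentiable, φ strongly convex continuously differentiable with Lφ − f, lφ + f convex; g proper lsc convex; h convex; F = f + g − h bounded below. Let (x^k) be generated by DCAe. If x* is a limit point of (x^k), then x* is a critical point of F, i.e., [∇f(x*) + ∂g(x*)] ∩ ∂h(x*) ≠ ∅. -/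
open Filter Topology

/-!
Along the iterates, `F + δ L D_φ(x^{k-1}, x^k)` is nonincreasing: the optimality condition of the
subproblem, the first-order inequalities of the convex functions `Lφ - f` and `lφ + f` and the
subgradient inequality of `h` give
`F(x^{k+1}) + L D_φ(x^k, x^{k+1}) ≤ F(x^k) + (L + l) D_φ(x^k, y^k)`, and the extrapolation rule
bounds the last term. As `F` is bounded below, `D_φ(x^{k-1}, x^k) → 0`, so `x^k - x^{k-1} → 0` by
strong convexity of `φ`, and along the subsequence `x^{k+1}` and `y^k` also tend to `x*`. The
convex function `h` is locally Lipschitz, so its subgradients `ξ^k` stay bounded near `x*` and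
converge along a further subsequence to some `ξ*`. The graph of the subdifferential of a lower
semicontinuous function is closed, so in the limit `ξ* ∈ ∂h(x*)` and `ξ* - ∇f(x*) ∈ ∂g(x*)`.
-/

open Set Metric InnerProductSpace
open scoped NNReal Gradient

theorem tendsto_zero_of_sufficient_decrease {F d : ℕ → ℝ} {a c : ℝ} (ha : 0 ≤ a) (hac : a < c)
    (hF : BddBelow (range F)) (hd : ∀ k, 0 ≤ d k)
    (hdesc : ∀ k, F (k + 1) + c * d (k + 1) ≤ F k + a * d k) :
    Tendsto d atTop (𝓝 0) := by
  set e : ℕ → ℝ := fun k => F k + a * d k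
  have hgap : ∀ k, (c - a) * d (k + 1) ≤ e k - e (k + 1) := fun k => by
    simp only [e]; linarith [hdesc k]
  have he_anti : Antitone e := antitone_nat_of_succ_le fun k => by
    nlinarith [hgap k, hd (k + 1)]
  have he_bdd : BddBelow (range e) := by
    obtain ⟨B, hB⟩ := hF
    exact ⟨B, by rintro _ ⟨k, rfl⟩; nlinarith [hB ⟨k, rfl⟩, hd k]⟩
  have he_lim := tendsto_atTop_ciInf he_anti he_bdd
  have hgap_lim : Tendsto (fun k => (e k - e (k + 1)) / (c - a)) atTop (𝓝 0) := by
    simpa using (he_lim.sub (he_lim.comp (tendsto_add_atTop_nat 1))).div_const (c - a)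
  rw [← tendsto_add_atTop_iff_nat 1]
  refine squeeze_zero (fun k => hd (k + 1)) (fun k => ?_) hgap_lim
  rw [le_div_iff₀ (by linarith), mul_comm]
  exact hgap k

section

variable {E : Type*} [NormedAddCommGroup E] [InnerProductSpace ℝ E]

theorem ConvexOn.sub_le_of_hasFDerivAt_of_forall_add_le {ψ g : E → ℝ} {D : StrongDual ℝ E}
    {w : E} (hg : ConvexOn ℝ univ g) (hψ : HasFDerivAt ψ D w)
    (hmin : ∀ z, ψ w + g w ≤ ψ z + g z) (z : E) : g w - D (z - w) ≤ g z := by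
  set q : ℝ → ℝ := fun t => ψ (w + t • (z - w)) + t * (g z - g w)
  have hq : HasDerivAt q (D (z - w) + (g z - g w)) 0 := by
    have hline : HasDerivAt (fun t : ℝ => w + t • (z - w)) (z - w) 0 := by
      simpa using ((hasDerivAt_id (0 : ℝ)).smul_const (z - w)).const_add w
    have hψ' : HasFDerivAt ψ D (w + (0 : ℝ) • (z - w)) := by simpa using hψ
    exact (hψ'.comp_hasDerivAt 0 hline).add (hasDerivAt_mul_const (g z - g w))
  have hq_min : IsMinOn q (Icc 0 1) 0 := by
    rintro t ⟨ht0, ht1⟩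
    have hconv : g (w + t • (z - w)) ≤ (1 - t) * g w + t * g z := by
      have := hg.2 (mem_univ w) (mem_univ z) (sub_nonneg.2 ht1) ht0 (by ring)
      rwa [show (1 - t) • w + t • z = w + t • (z - w) by module, smul_eq_mul, smul_eq_mul] at this
    have := hmin (w + t • (z - w))
    simp only [q, zero_smul, add_zero, zero_mul, mem_ofPred_eq]
    nlinarith
  have hcone : (1 : ℝ) ∈ posTangentConeAt (Icc 0 1) 0 :=
    mem_posTangentConeAt_of_segment_subset (by simp [segment_eq_Icc])
  have := hq_min.localize.hasFDerivWithinAt_nonneg hq.hasFDerivAt.hasFDerivWithinAt hcone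
  rw [ContinuousLinearMap.toSpanSingleton_apply, one_smul] at this
  linarith

theorem ConvexOn.add_le_of_hasFDerivAt {ψ : E → ℝ} {D : StrongDual ℝ E} {b : E}
    (hψ : ConvexOn ℝ univ ψ) (hD : HasFDerivAt ψ D b) (a : E) : ψ b + D (a - b) ≤ ψ a := by
  -- `b` minimizes `-ψ + ψ = 0`
  have := hψ.sub_le_of_hasFDerivAt_of_forall_add_le hD.neg (fun z => by simp) a
  simpa [sub_eq_add_neg] using this

theorem norm_le_of_mem_convexSubdiff {h : E → ℝ} {x ξ : E} {K : ℝ≥0} {r : ℝ} (hr : 0 < r)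
    (hK : LipschitzOnWith K h (closedBall x r)) (hξ : ξ ∈ ConvexSubdiff h x) : ‖ξ‖ ≤ K := by
  rcases eq_or_ne ξ 0 with rfl | hξ0
  · simp
  have hξpos : 0 < ‖ξ‖ := norm_pos_iff.2 hξ0
  set u : E := (r / ‖ξ‖) • ξ
  have hu : ‖u‖ = r := by
    rw [norm_smul, Real.norm_of_nonneg (by positivity), div_mul_cancel₀ _ hξpos.ne']
  have hinner : (inner ℝ ξ u : ℝ) = r * ‖ξ‖ := by
    rw [real_inner_smul_right, real_inner_self_eq_norm_sq]; field_simp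
  have hsub := hξ (x + u)
  have hlip : h (x + u) - h x ≤ K * r := by
    have := hK.dist_le_mul (x + u) (by simp [hu]) x (mem_closedBall_self hr.le)
    rw [Real.dist_eq, dist_eq_norm, add_sub_cancel_left, hu] at this
    exact (le_abs_self _).trans this
  rw [add_sub_cancel_left, hinner] at hsub
  nlinarith

theorem exists_tendsto_subseq_of_mem_convexSubdiff [ProperSpace E] {h : E → ℝ}
    (hh : LocallyLipschitz h) {x ξ : ℕ → E} {x₀ : E} (hx : Tendsto x atTop (𝓝 x₀))
    (hξ : ∀ n, ξ n ∈ ConvexSubdiff h (x n)) :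
    ∃ ξ₀, ∃ ψ : ℕ → ℕ, StrictMono ψ ∧ Tendsto (ξ ∘ ψ) atTop (𝓝 ξ₀) := by
  obtain ⟨K, t, ht, hK⟩ := hh x₀
  obtain ⟨ε, hε, hball⟩ := Metric.mem_nhds_iff.1 ht
  have hbdd : ∀ᶠ n in atTop, ξ n ∈ closedBall 0 K := by
    filter_upwards [hx.eventually (ball_mem_nhds x₀ (half_pos hε))] with n hn
    refine mem_closedBall_zero_iff.2 (norm_le_of_mem_convexSubdiff (half_pos hε) ?_ (hξ n))
    refine hK.mono ((closedBall_subset_ball' ?_).trans hball)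
    linarith [mem_ball.1 hn]
  obtain ⟨ξ₀, -, ψ, hψ, hlim⟩ := tendsto_subseq_of_frequently_bounded isBounded_closedBall
    hbdd.frequently
  exact ⟨ξ₀, ψ, hψ, hlim⟩

theorem LowerSemicontinuous.mem_convexSubdiff_of_tendsto {α : Type*} {l : Filter α} [l.NeBot]
    {h : E → ℝ} (hh : LowerSemicontinuous h) {x v : α → E} {x₀ v₀ : E} (hx : Tendsto x l (𝓝 x₀))
    (hv : Tendsto v l (𝓝 v₀)) (hmem : ∀ᶠ n in l, v n ∈ ConvexSubdiff h (x n)) :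
    v₀ ∈ ConvexSubdiff h x₀ := by
  have hclosed : IsClosed {p : E × E | p.2 ∈ ConvexSubdiff h p.1} := by
    have hgraph : {p : E × E | p.2 ∈ ConvexSubdiff h p.1} =
        ⋂ z, (fun p : E × E => h p.1 + (inner ℝ p.2 (z - p.1) : ℝ)) ⁻¹' Iic (h z) := by
      ext p; simp [ConvexSubdiff]
    rw [hgraph]
    exact isClosed_iInter fun z => LowerSemicontinuous.isClosed_preimage
      ((hh.comp continuous_fst).add
        (continuous_snd.inner (continuous_const.sub continuous_fst)).lowerSemicontinuous) (h z)
  exact hclosed.mem_of_tendsto (hx.prodMk_nhds hv) hmem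

variable [CompleteSpace E]

theorem ContDiff.continuous_gradient {f : E → ℝ} (hf : ContDiff ℝ 1 f) : Continuous (∇ f) :=
  (toDual ℝ E).symm.continuous.comp (hf.continuous_fderiv one_ne_zero)

theorem half_mul_norm_sub_sq_le_Dphi {φ : E → ℝ} {ρ : ℝ} {a b : E} (hφ : DifferentiableAt ℝ φ b)
    (hφsc : ConvexOn ℝ univ (fun x => φ x - ρ / 2 * ‖x‖ ^ 2)) :
    ρ / 2 * ‖a - b‖ ^ 2 ≤ Dphi φ a b := by
  have hD := hφ.hasFDerivAt.sub ((hasStrictFDerivAt_norm_sq b).hasFDerivAt.const_mul (ρ / 2))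
  have := hφsc.add_le_of_hasFDerivAt hD a
  simp only [sub_apply, smul_apply, innerSL_apply_apply, smul_eq_mul, nsmul_eq_mul,
    Nat.cast_ofNat] at this
  rw [Dphi, inner_gradient_left, norm_sub_sq_real, real_inner_comm]
  rw [inner_sub_right, real_inner_self_eq_norm_sq] at this
  linarith

theorem sub_smul_gradient_mem_convexSubdiff_of_forall_le {φ g : E → ℝ} {L : ℝ} {c w : E}
    (hg : ConvexOn ℝ univ g) (hφ : DifferentiableAt ℝ φ w)
    (hmin : ∀ z, L * φ w + g w - (inner ℝ c w : ℝ) ≤ L * φ z + g z - (inner ℝ c z : ℝ)) :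
    c - L • ∇ φ w ∈ ConvexSubdiff g w := by
  intro z
  have hψ : HasFDerivAt (fun z => L * φ z - (inner ℝ c z : ℝ)) (L • fderiv ℝ φ w - innerSL ℝ c) w :=
    (hφ.hasFDerivAt.const_mul L).sub (innerSL ℝ c).hasFDerivAt
  have := hg.sub_le_of_hasFDerivAt_of_forall_add_le hψ (fun z => by linarith [hmin z]) z
  simp only [sub_apply, smul_apply, innerSL_apply_apply, smul_eq_mul] at this
  rw [inner_sub_left, real_inner_smul_left, inner_gradient_left, inner_sub_right]
  rw [inner_sub_right] at this
  linarith

theorem tendsto_sub_of_tendsto_Dphi {α : Type*} {l : Filter α} {φ : E → ℝ} {ρ : ℝ} (hρ : 0 < ρ)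
    (hφ : Differentiable ℝ φ) (hφsc : ConvexOn ℝ univ (fun x => φ x - ρ / 2 * ‖x‖ ^ 2))
    {a b : α → E} (hD : Tendsto (fun n => Dphi φ (a n) (b n)) l (𝓝 0)) :
    Tendsto (fun n => a n - b n) l (𝓝 0) := by
  have hsq : Tendsto (fun n => ‖a n - b n‖ ^ 2) l (𝓝 0) := by
    refine squeeze_zero (fun n => sq_nonneg _) (fun n => ?_) (by simpa using hD.const_mul (2 / ρ))
    have := half_mul_norm_sub_sq_le_Dphi (a := a n) (hφ (b n)) hφsc
    rw [div_mul_eq_mul_div, le_div_iff₀ hρ]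
    linarith
  rw [tendsto_zero_iff_norm_tendsto_zero]
  simpa [Real.sqrt_sq (norm_nonneg _)] using hsq.sqrt

namespace DCAe

variable {f g h φ : E → ℝ} {L l : ℝ}

theorem energy_descent {x y x' ξ : E} (hf : DifferentiableAt ℝ f y) (hφ : DifferentiableAt ℝ φ y)
    (hLf : ConvexOn ℝ univ (fun p => L * φ p - f p))
    (hlf : ConvexOn ℝ univ (fun p => l * φ p + f p)) (hξ : ξ ∈ ConvexSubdiff h x)
    (hg : L • ∇ φ y - ∇ f y + ξ - L • ∇ φ x' ∈ ConvexSubdiff g x') :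
    f x' + g x' - h x' + L * Dphi φ x x' ≤ f x + g x - h x + (L + l) * Dphi φ x y := by
  have hLf' := hLf.add_le_of_hasFDerivAt ((hφ.hasFDerivAt.const_mul L).sub hf.hasFDerivAt) x'
  have hlf' := hlf.add_le_of_hasFDerivAt ((hφ.hasFDerivAt.const_mul l).add hf.hasFDerivAt) x
  have hg' := hg x
  have hξ' := hξ x'
  simp only [sub_apply, add_apply, smul_apply, smul_eq_mul, ← inner_gradient_left] at hLf' hlf'
  simp only [Dphi, inner_sub_left, inner_add_left, inner_sub_right, real_inner_smul_left]
    at hLf' hlf' hg' hξ' ⊢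
  linarith

theorem tendsto_sub_pred {ρ δ : ℝ} {x y ξ : ℕ → E} (hL : 0 < L) (hρ : 0 < ρ)
    (hδ : δ ∈ Ioo 0 1) (hf : Differentiable ℝ f) (hφ : Differentiable ℝ φ)
    (hφsc : ConvexOn ℝ univ (fun x => φ x - ρ / 2 * ‖x‖ ^ 2))
    (hLf : ConvexOn ℝ univ (fun p => L * φ p - f p))
    (hlf : ConvexOn ℝ univ (fun p => l * φ p + f p))
    (hFbdd : BddBelow (range fun x => f x + g x - h x))
    (hext : ∀ k, (L + l) * Dphi φ (x k) (y k) ≤ δ * L * Dphi φ (x (k - 1)) (x k))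
    (hξ : ∀ k, ξ k ∈ ConvexSubdiff h (x k))
    (hg : ∀ k, L • ∇ φ (y k) - ∇ f (y k) + ξ k - L • ∇ φ (x (k + 1)) ∈
      ConvexSubdiff g (x (k + 1))) :
    Tendsto (fun k => x k - x (k - 1)) atTop (𝓝 0) := by
  have hD : Tendsto (fun k => Dphi φ (x (k - 1)) (x k)) atTop (𝓝 0) := by
    refine tendsto_zero_of_sufficient_decrease (F := fun k => f (x k) + g (x k) - h (x k))
      (c := L) (mul_nonneg hδ.1.le hL.le) (by nlinarith [hδ.2])
      (hFbdd.mono (by rintro _ ⟨k, rfl⟩; exact ⟨x k, rfl⟩))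
      (fun k => (by positivity : 0 ≤ ρ / 2 * _).trans (half_mul_norm_sub_sq_le_Dphi (hφ _) hφsc))
      (fun k => ?_)
    have := energy_descent (hf _) (hφ _) hLf hlf (hξ k) (hg k)
    simp only [Nat.add_sub_cancel]
    linarith [hext k]
  simpa using (tendsto_sub_of_tendsto_Dphi hρ hφ hφsc hD).neg

end DCAe

end

theorem stmt7_general {E : Type*} [NormedAddCommGroup E] [InnerProductSpace ℝ E]
    [FiniteDimensional ℝ E]
    (f g h φ : E → ℝ) (L l ρ δ : ℝ) (hL : 0 < L) (hρ : 0 < ρ)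
    (hδ : δ ∈ Set.Ioo (0 : ℝ) 1)
    (hf : ContDiff ℝ 1 f) (hφ : ContDiff ℝ 1 φ)
    (hφsc : ConvexOn ℝ Set.univ (fun x => φ x - ρ / 2 * ‖x‖ ^ 2))
    (hLf : ConvexOn ℝ Set.univ (fun x => L * φ x - f x))
    (hlf : ConvexOn ℝ Set.univ (fun x => l * φ x + f x))
    (hg : ConvexOn ℝ Set.univ g) (hglsc : LowerSemicontinuous g)
    (hh : ConvexOn ℝ Set.univ h)
    (hFbdd : BddBelow (Set.range (fun x => f x + g x - h x)))
    (x y ξ : ℕ → E) (β : ℕ → ℝ) (hβ : ∀ k, β k ∈ Set.Ico (0 : ℝ) 1)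
    (hy : ∀ k, y k = x k + β k • (x k - x (k - 1)))
    (hext : ∀ k, (L + l) * Dphi φ (x k) (y k) ≤ δ * L * Dphi φ (x (k - 1)) (x k))
    (hξ : ∀ k, ξ k ∈ ConvexSubdiff h (x k))
    (hmin : ∀ k, ∀ z : E,
      L * φ (x (k + 1)) + g (x (k + 1))
          - (inner ℝ (L • gradient φ (y k) - gradient f (y k) + ξ k) (x (k + 1)) : ℝ)
        ≤ L * φ z + g z
          - (inner ℝ (L • gradient φ (y k) - gradient f (y k) + ξ k) z : ℝ))
    (xstar : E) (kj : ℕ → ℕ) (hmono : StrictMono kj)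
    (hlim : Tendsto (fun j => x (kj j)) atTop (nhds xstar)) :
    ∃ v ∈ ConvexSubdiff g xstar, gradient f xstar + v ∈ ConvexSubdiff h xstar := by
  have hf' := hf.differentiable one_ne_zero
  have hφ' := hφ.differentiable one_ne_zero
  have hgsub (k : ℕ) := sub_smul_gradient_mem_convexSubdiff_of_forall_le hg (hφ' _) (hmin k)
  have hstep := DCAe.tendsto_sub_pred hL hρ hδ hf' hφ' hφsc hLf hlf hFbdd hext hξ hgsub
  obtain ⟨ξstar, ψ, hψ, hξlim⟩ :=
    exists_tendsto_subseq_of_mem_convexSubdiff hh.locallyLipschitz hlim fun j => hξ (kj j)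
  set m := kj ∘ ψ
  have hm : Tendsto m atTop atTop := (hmono.comp hψ).tendsto_atTop
  have hxm : Tendsto (fun j => x (m j)) atTop (𝓝 xstar) := hlim.comp hψ.tendsto_atTop
  have hxm' : Tendsto (fun j => x (m j + 1)) atTop (𝓝 xstar) := by
    simpa using (hstep.comp ((tendsto_add_atTop_nat 1).comp hm)).add hxm
  have hym : Tendsto (fun j => y (m j)) atTop (𝓝 xstar) := by
    have hβbdd : IsBoundedUnder (· ≤ ·) atTop (norm ∘ β) :=
      isBoundedUnder_of ⟨1, fun k => by simp [abs_of_nonneg (hβ k).1, (hβ k).2.le]⟩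
    have hβstep := hβbdd.smul_tendsto_zero hstep
    simpa [hy] using hxm.add (hβstep.comp hm)
  have hcφ := hφ.continuous_gradient.tendsto xstar
  have hcf := hf.continuous_gradient.tendsto xstar
  refine ⟨ξstar - ∇ f xstar, hglsc.mem_convexSubdiff_of_tendsto hxm' ?_
    (Eventually.of_forall fun j => hgsub (m j)), ?_⟩
  · have hlimit := ((((hcφ.comp hym).const_smul L).sub (hcf.comp hym)).add hξlim).sub
      ((hcφ.comp hxm').const_smul L)
    rwa [show L • ∇ φ xstar - ∇ f xstar + ξstar - L • ∇ φ xstar = ξstar - ∇ f xstar by abel]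
      at hlimit
  · rw [add_sub_cancel]
    exact hh.locallyLipschitz.continuous.lowerSemicontinuous.mem_convexSubdiff_of_tendsto hxm hξlim
      (Eventually.of_forall fun j => hξ (m j))

theorem stmt7 {E : Type*} [NormedAddCommGroup E] [InnerProductSpace ℝ E]
    [FiniteDimensional ℝ E]
    (f g h φ : E → ℝ) (L l ρ δ : ℝ) (hL : 0 < L) (hl : 0 ≤ l) (hρ : 0 < ρ)
    (hδ : δ ∈ Set.Ioo (0 : ℝ) 1)
    (hf : ContDiff ℝ 1 f) (hφ : ContDiff ℝ 1 φ)
    (hφsc : ConvexOn ℝ Set.univ (fun x => φ x - ρ / 2 * ‖x‖ ^ 2))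
    (hLf : ConvexOn ℝ Set.univ (fun x => L * φ x - f x))
    (hlf : ConvexOn ℝ Set.univ (fun x => l * φ x + f x))
    (hg : ConvexOn ℝ Set.univ g) (hglsc : LowerSemicontinuous g)
    (hh : ConvexOn ℝ Set.univ h)
    (hFbdd : BddBelow (Set.range (fun x => f x + g x - h x)))
    (x y ξ : ℕ → E) (β : ℕ → ℝ) (hβ : ∀ k, β k ∈ Set.Ico (0 : ℝ) 1)
    (hy : ∀ k, y k = x k + β k • (x k - x (k - 1)))
    (hext : ∀ k, (L + l) * Dphi φ (x k) (y k) ≤ δ * L * Dphi φ (x (k - 1)) (x k))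
    (hξ : ∀ k, ξ k ∈ ConvexSubdiff h (x k))
    (hmin : ∀ k, ∀ z : E,
      L * φ (x (k + 1)) + g (x (k + 1))
          - (inner ℝ (L • gradient φ (y k) - gradient f (y k) + ξ k) (x (k + 1)) : ℝ)
        ≤ L * φ z + g z
          - (inner ℝ (L • gradient φ (y k) - gradient f (y k) + ξ k) z : ℝ))
    (xstar : E) (kj : ℕ → ℕ) (hmono : StrictMono kj)
    (hlim : Tendsto (fun j => x (kj j)) atTop (nhds xstar)) :
    ∃ v ∈ ConvexSubdiff g xstar, gradient f xstar + v ∈ ConvexSubdiff h xstar :=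
  stmt7_general f g h φ L l ρ δ hL hρ hδ hf hφ hφsc hLf hlf hg hglsc hh hFbdd x y ξ β hβ hy hext hξ
    hmin xstar kj hmono hlim
end

section
/- Let p ∈ ℝ^n, λ ≥ 0, c₂ > 0, c₁ ≥ 0. The minimizer over u ∈ ℝ₊^n of λ‖u‖₁ + ⟨p, u⟩ + c₁(‖u‖²/2)² + c₂(‖u‖²/2) is u* = τ*·[−p − λ]₊, where [−p − λ]₊ has components max(0, −p_i − λ) and τ* is the unique positive root of c₁‖[−p − λ]₊‖²τ³ + c₂τ − 1 = 0 (when [−p − λ]₊ ≠ 0; u* = 0 otherwise). -/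
set_option maxHeartbeats 2000000

open Finset

theorem stmt14 {n : ℕ} (p : EuclideanSpace ℝ (Fin n)) (lam c₁ c₂ : ℝ)
    (hlam : 0 ≤ lam) (hc₁ : 0 ≤ c₁) (hc₂ : 0 < c₂)
    (q : EuclideanSpace ℝ (Fin n)) (hq : q = fun i => max 0 (-(p i) - lam))
    (obj : EuclideanSpace ℝ (Fin n) → ℝ)
    (hobj : obj = fun u =>
      lam * (∑ i, |u i|) + (inner ℝ p u : ℝ)
        + c₁ * (‖u‖ ^ 2 / 2) ^ 2 + c₂ * (‖u‖ ^ 2 / 2)) :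
    (q ≠ 0 → ∀ τ : ℝ, 0 < τ → c₁ * ‖q‖ ^ 2 * τ ^ 3 + c₂ * τ - 1 = 0 →
      (∀ i, 0 ≤ (τ • q) i) ∧
      (∀ u : EuclideanSpace ℝ (Fin n), (∀ i, 0 ≤ u i) →
        obj (τ • q) ≤ obj u ∧ (obj u = obj (τ • q) → u = τ • q))) ∧
    (q = 0 → ∀ u : EuclideanSpace ℝ (Fin n), (∀ i, 0 ≤ u i) →
      obj 0 ≤ obj u ∧ (obj u = obj 0 → u = 0)) := by
  have hqa : ∀ i, q i = max 0 (-(p i) - lam) := fun i => by rw [hq]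
  have hq0 : ∀ i, 0 ≤ q i := fun i => by rw [hqa i]; exact le_max_left _ _
  have hq1 : ∀ i, -(p i) - lam ≤ q i := fun i => by rw [hqa i]; exact le_max_right _ _
  have hinner : ∀ x y : EuclideanSpace ℝ (Fin n), (inner ℝ x y : ℝ) = ∑ i, x i * y i := by
    intro x y; simp [PiLp.inner_apply, RCLike.inner_apply, conj_trivial]; exact Finset.sum_congr rfl fun i _ => mul_comm _ _
  have hnorm : ∀ u : EuclideanSpace ℝ (Fin n), ‖u‖ ^ 2 = ∑ i, (u i) ^ 2 := by
    intro u
    rw [← real_inner_self_eq_norm_sq]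
    rw [hinner]; simp [sq]
  -- objective value on nonnegative vectors
  have hobjn : ∀ u : EuclideanSpace ℝ (Fin n), (∀ i, 0 ≤ u i) →
      obj u = (∑ i, (lam + p i) * u i) + c₁ * (‖u‖ ^ 2 / 2) ^ 2 + c₂ * (‖u‖ ^ 2 / 2) := by
    intro u hu
    have h1 : lam * (∑ i, |u i|) + (∑ i, p i * u i) = ∑ i, (lam + p i) * u i := by
      rw [Finset.mul_sum, ← Finset.sum_add_distrib]
      exact Finset.sum_congr rfl fun i _ => by rw [abs_of_nonneg (hu i)]; ring
    rw [hobj]; simp only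
    rw [hinner, h1]
  -- key sum for q
  have hsumq : ∑ i, (lam + p i) * q i = -∑ i, (q i) ^ 2 := by
    rw [← Finset.sum_neg_distrib]
    refine Finset.sum_congr rfl fun i _ => ?_
    rcases le_or_gt (-(p i) - lam) 0 with h | h
    · have : q i = 0 := by rw [hqa i]; exact max_eq_left h
      rw [this]; ring
    · have : q i = -(p i) - lam := by rw [hqa i]; exact max_eq_right h.le
      rw [this]; ring
  -- componentwise lower bound
  have hA : ∀ u : EuclideanSpace ℝ (Fin n), (∀ i, 0 ≤ u i) →
      -∑ i, q i * u i ≤ ∑ i, (lam + p i) * u i := by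
    intro u hu
    rw [← Finset.sum_neg_distrib]
    refine Finset.sum_le_sum fun i _ => ?_
    have : -(q i) ≤ lam + p i := by linarith [hq1 i]
    calc -(q i * u i) = -(q i) * u i := by ring
    _ ≤ (lam + p i) * u i := mul_le_mul_of_nonneg_right this (hu i)
  constructor
  · intro hne τ hτ hroot
    have hk : 0 < ‖q‖ := norm_pos_iff.2 hne
    set k := ‖q‖ with hkdef
    set t₀ := τ * k with ht₀def
    have ht₀ : 0 < t₀ := mul_pos hτ hk
    have hroot' : c₁ * t₀ ^ 3 + c₂ * t₀ - k = 0 := by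
      rw [ht₀def]; linear_combination k * hroot
    have hτq : ∀ i, (τ • q) i = τ * q i := fun i => rfl
    have hτq0 : ∀ i, 0 ≤ (τ • q) i := fun i => by
      rw [hτq i]; exact mul_nonneg hτ.le (hq0 i)
    have hnτq : ‖τ • q‖ = t₀ := by
      rw [norm_smul, Real.norm_eq_abs, abs_of_pos hτ, ht₀def]
    have hobjτ : obj (τ • q) = -(k * t₀) + c₁ * (t₀ ^ 2 / 2) ^ 2 + c₂ * (t₀ ^ 2 / 2) := by
      rw [hobjn _ hτq0, hnτq]
      have hs : ∑ i, (lam + p i) * (τ • q) i = -(k * t₀) := by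
        have hs2 : ∑ i, (lam + p i) * (τ • q) i = τ * ∑ i, (lam + p i) * q i := by
          rw [Finset.mul_sum]
          exact Finset.sum_congr rfl fun i _ => by rw [hτq i]; ring
        rw [hs2, hsumq, ← hnorm, ← hkdef, ht₀def]; ring
      rw [hs]
    refine ⟨hτq0, fun u hu => ?_⟩
    set t := ‖u‖ with htdef
    have ht : 0 ≤ t := norm_nonneg u
    set SA := ∑ i, (lam + p i) * u i with hSAdef
    set I : ℝ := inner ℝ q u with hIdef
    have hobju : obj u = SA + c₁ * (t ^ 2 / 2) ^ 2 + c₂ * (t ^ 2 / 2) := hobjn u hu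
    have hAu : -I ≤ SA := by rw [hIdef, hinner q u]; exact hA u hu
    have hB : I ≤ k * t := real_inner_le_norm q u
    have h3 : 0 ≤ c₁ * ((t - t₀) ^ 2 * (t ^ 2 + 2 * t * t₀ + 3 * t₀ ^ 2)) :=
      mul_nonneg hc₁ (mul_nonneg (sq_nonneg _) (by nlinarith [mul_nonneg ht ht₀.le]))
    have hCid : (-(k * t) + c₁ * (t ^ 2 / 2) ^ 2 + c₂ * (t ^ 2 / 2))
        - (-(k * t₀) + c₁ * (t₀ ^ 2 / 2) ^ 2 + c₂ * (t₀ ^ 2 / 2))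
        = c₂ / 2 * (t - t₀) ^ 2 + c₁ / 4 * ((t - t₀) ^ 2 * (t ^ 2 + 2 * t * t₀ + 3 * t₀ ^ 2)) := by
      linear_combination (t - t₀) * hroot'
    have h4 : 0 ≤ c₂ / 2 * (t - t₀) ^ 2 := mul_nonneg (by linarith) (sq_nonneg _)
    have hle : obj (τ • q) ≤ obj u := by
      rw [hobju, hobjτ]
      linarith [hAu, hB, h3, h4, hCid]
    refine ⟨hle, fun heq => ?_⟩
    rw [hobju, hobjτ] at heq
    have h6 : c₂ / 2 * (t - t₀) ^ 2 ≤ 0 := by linarith [hAu, hB, h3, hCid, heq]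
    have h7 : (t - t₀) ^ 2 = 0 := by nlinarith [sq_nonneg (t - t₀), h6]
    have htt : t = t₀ := by have := sq_eq_zero_iff.1 h7; linarith
    have hBeq : I = k * t := by
      refine le_antisymm hB ?_
      linarith [hAu, hCid, h3, h4, heq]
    have hcs : ‖u‖ • q = ‖q‖ • u := by
      refine inner_eq_norm_mul_iff_real.1 ?_
      rw [← hIdef, hBeq, ← htdef, ← hkdef]
    have h5 : u = (k⁻¹ * t) • q := by
      have h8 : k⁻¹ • (t • q) = k⁻¹ • (k • u) := by
        rw [← htdef, ← hkdef] at hcs; rw [hcs]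
      rw [smul_smul, smul_smul, inv_mul_cancel₀ hk.ne', one_smul] at h8
      exact h8.symm
    rw [h5, htt]
    congr 1
    rw [ht₀def]
    field_simp
  · intro hq0' u hu
    have hpl : ∀ i, 0 ≤ lam + p i := by
      intro i
      have h0 : max 0 (-(p i) - lam) = 0 := by rw [← hqa i, hq0']; rfl
      have := max_eq_left_iff.1 h0
      linarith
    have hz : ∀ i, (0 : EuclideanSpace ℝ (Fin n)) i = 0 := fun _ => rfl
    have hobj0 : obj 0 = 0 := by
      rw [hobjn 0 (fun i => le_of_eq (hz i).symm)]
      simp [hz]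
    have hSA : 0 ≤ ∑ i, (lam + p i) * u i :=
      Finset.sum_nonneg fun i _ => mul_nonneg (hpl i) (hu i)
    have hobju := hobjn u hu
    have h1 : 0 ≤ c₁ * (‖u‖ ^ 2 / 2) ^ 2 := mul_nonneg hc₁ (sq_nonneg _)
    have h2 : 0 ≤ c₂ * (‖u‖ ^ 2 / 2) :=
      mul_nonneg hc₂.le (by positivity)
    constructor
    · rw [hobj0, hobju]; linarith
    · intro heq
      rw [hobj0, hobju] at heq
      have h6 : c₂ * (‖u‖ ^ 2 / 2) ≤ 0 := by linarith
      have h7 : ‖u‖ ^ 2 = 0 := by nlinarith [sq_nonneg ‖u‖]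
      exact norm_eq_zero.1 (by nlinarith [norm_nonneg u, h7])
end

section
/- Suppose ∇φ, ∇f, ∇h are Lipschitz on a bounded set containing all iterates with constants L_φ, L_f, L_h, ‖∇²φ‖ ≤ M on this set, and β_k ≤ 1. Then with z^k = (x^k, x^{k−1}) and Φ(x,y) = F(x) + ((1+δ)L/2)·D_φ(y,x), there is κ > 0 (explicitly κ = √2·(L·L_φ + L_f + L_h + (1+δ)L(M + L_φ)/2)) such that dist(0, ∂^L Φ(z^{k+1})) ≤ κ‖z^{k+1} − z^k‖ for all k (relative error condition). -/
/-! The optimality condition of the convex subproblem makes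
`w = L∇φ(yᵏ) - ∇f(yᵏ) + ∇h(xᵏ) - L∇φ(xᵏ⁺¹)` a subgradient of `g` at `xᵏ⁺¹`. The rest of `Φ`,
`Φ - g ∘ fst`, is differentiable, with gradient `(∇f - ∇h - c T*(xᵏ - xᵏ⁺¹), c (∇φ(xᵏ) - ∇φ(xᵏ⁺¹)))`
at `zᵏ⁺¹ = (xᵏ⁺¹, xᵏ)`, where `c = (1 + δ)L/2` and `T = D(∇φ)(xᵏ⁺¹)`; adding `(w, 0)` gives an
element of the Fréchet, hence of the limiting, subdifferential. Its first component regroups into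
differences of gradients at `xᵏ⁺¹, yᵏ, xᵏ`, which the Lipschitz bounds control by
`‖xᵏ⁺¹ - yᵏ‖` and `‖xᵏ - xᵏ⁺¹‖`; since `βₖ ≤ 1` both are at most
`‖xᵏ⁺¹ - xᵏ‖ + ‖xᵏ - xᵏ⁻¹‖ ≤ √2 ‖zᵏ⁺¹ - zᵏ‖`. -/

open Filter Topology

/-- Fréchet subdifferential. -/
def FrechetSubdiff {E : Type*} [NormedAddCommGroup E] [InnerProductSpace ℝ E]
    (J : E → ℝ) (x : E) : Set E :=
  {u | ∀ ε > (0 : ℝ), ∃ δ > (0 : ℝ), ∀ y : E, ‖y - x‖ < δ →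
    J y - J x - (inner ℝ u (y - x) : ℝ) ≥ -ε * ‖y - x‖}

/-- Limiting (Mordukhovich) subdifferential. -/
def LimitingSubdiff {E : Type*} [NormedAddCommGroup E] [InnerProductSpace ℝ E]
    (J : E → ℝ) (x : E) : Set E :=
  {u | ∃ (xs us : ℕ → E),
    Tendsto xs atTop (nhds x) ∧
    Tendsto (fun k => J (xs k)) atTop (nhds (J x)) ∧
    (∀ k, us k ∈ FrechetSubdiff J (xs k)) ∧
    Tendsto us atTop (nhds u)}

open InnerProductSpace
open scoped RealInnerProductSpace Gradient

section Subdifferential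

variable {F : Type*} [NormedAddCommGroup F] [InnerProductSpace ℝ F] {J K : F → ℝ} {u v x : F}

theorem HasGradientAt.mem_frechetSubdiff [CompleteSpace F] (hJ : HasGradientAt J u x) :
    u ∈ FrechetSubdiff J x := by
  intro ε hε
  obtain ⟨δ, hδ, hball⟩ := Metric.eventually_nhds_iff.mp
    ((hasGradientAt_iff_isLittleO.mp hJ).def hε)
  refine ⟨δ, hδ, fun y hy => ?_⟩
  have := hball (by rwa [dist_eq_norm])
  rw [Real.norm_eq_abs, abs_le] at this
  linarith [this.1]

theorem mem_frechetSubdiff_of_forall_le (h : ∀ y, J x + ⟪u, y - x⟫ ≤ J y) :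
    u ∈ FrechetSubdiff J x := fun ε hε =>
  ⟨1, one_pos, fun y _ => by nlinarith [h y, mul_nonneg hε.le (norm_nonneg (y - x))]⟩

theorem add_mem_frechetSubdiff_add (hu : u ∈ FrechetSubdiff J x)
    (hv : v ∈ FrechetSubdiff K x) : u + v ∈ FrechetSubdiff (J + K) x := by
  intro ε hε
  obtain ⟨δ₁, hδ₁, h₁⟩ := hu (ε / 2) (half_pos hε)
  obtain ⟨δ₂, hδ₂, h₂⟩ := hv (ε / 2) (half_pos hε)
  refine ⟨min δ₁ δ₂, lt_min hδ₁ hδ₂, fun y hy => ?_⟩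
  have e₁ := h₁ y (hy.trans_le (min_le_left _ _))
  have e₂ := h₂ y (hy.trans_le (min_le_right _ _))
  simp only [Pi.add_apply, inner_add_left]
  linarith

theorem frechetSubdiff_subset_limitingSubdiff : FrechetSubdiff J x ⊆ LimitingSubdiff J x :=
  fun u hu => ⟨fun _ => x, fun _ => u, tendsto_const_nhds, tendsto_const_nhds, fun _ => hu,
    tendsto_const_nhds⟩

theorem infDist_zero_limitingSubdiff_le (hu : u ∈ FrechetSubdiff J x) :
    Metric.infDist 0 (LimitingSubdiff J x) ≤ ‖u‖ := by
  simpa using Metric.infDist_le_dist_of_mem (x := 0) (frechetSubdiff_subset_limitingSubdiff hu)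

end Subdifferential

section Gradient

variable {E F : Type*} [NormedAddCommGroup E] [InnerProductSpace ℝ E] [CompleteSpace E]
  [NormedAddCommGroup F] [InnerProductSpace ℝ F] [CompleteSpace F]

theorem HasGradientAt.add {f g : E → ℝ} {u v x : E} (hf : HasGradientAt f u x)
    (hg : HasGradientAt g v x) : HasGradientAt (fun y => f y + g y) (u + v) x := by
  rw [hasGradientAt_iff_hasFDerivAt, map_add]
  exact hf.hasFDerivAt.add hg.hasFDerivAt

theorem HasGradientAt.sub {f g : E → ℝ} {u v x : E} (hf : HasGradientAt f u x)
    (hg : HasGradientAt g v x) : HasGradientAt (fun y => f y - g y) (u - v) x := by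
  rw [hasGradientAt_iff_hasFDerivAt, map_sub]
  exact hf.hasFDerivAt.sub hg.hasFDerivAt

theorem HasGradientAt.const_mul {f : E → ℝ} {u x : E} (hf : HasGradientAt f u x) (c : ℝ) :
    HasGradientAt (fun y => c * f y) (c • u) x := by
  rw [hasGradientAt_iff_hasFDerivAt, map_smul]
  exact hf.hasFDerivAt.const_mul c

theorem hasGradientAt_inner_const_left (A x : E) : HasGradientAt (fun z => ⟪A, z⟫) A x :=
  (innerSL ℝ A).hasFDerivAt

theorem HasGradientAt.comp_fst {f : E → ℝ} {u : E} {z : WithLp 2 (E × F)}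
    (hf : HasGradientAt f u z.fst) :
    HasGradientAt (fun z : WithLp 2 (E × F) => f z.fst) (WithLp.toLp 2 (u, 0)) z := by
  refine (hf.hasFDerivAt.comp z (WithLp.fstL 2 ℝ E F).hasFDerivAt).congr_fderiv ?_
  ext v
  simp

theorem ContDiff.differentiable_gradient {φ : E → ℝ} (hφ : ContDiff ℝ 2 φ) :
    Differentiable ℝ (∇ φ) :=
  (toDual ℝ E).symm.differentiable.comp
    ((hφ.fderiv_right (m := 1) (by norm_num)).differentiable one_ne_zero)

theorem ConvexOn.add_inner_le_of_isMinOn_add {g ψ : E → ℝ} {a G : E}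
    (hg : ConvexOn ℝ Set.univ g) (hψ : HasGradientAt ψ G a) (hmin : IsMinOn (ψ + g) Set.univ a)
    (t : E) : g a + ⟪-G, t - a⟫ ≤ g t := by
  set d := t - a
  set q : ℝ → ℝ := fun s => ψ (a + s • d)
  have hq : HasDerivAt q ⟪G, d⟫ 0 := by
    have hline : HasDerivAt (fun s : ℝ => a + s • d) d 0 := by
      simpa using ((hasDerivAt_id (0 : ℝ)).smul_const d).const_add a
    have hψ' : HasFDerivAt ψ (toDual ℝ E G) (a + (0 : ℝ) • d) := by simpa using hψ.hasFDerivAt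
    exact hψ'.comp_hasDerivAt 0 hline
  have hslope : ∀ s ∈ Set.Ioc (0 : ℝ) 1, g a - g t ≤ slope q 0 s := by
    rintro s ⟨hs0, hs1⟩
    have hchord : g (a + s • d) ≤ (1 - s) * g a + s * g t := by
      rw [show a + s • d = (1 - s) • a + s • t by simp only [d]; module]
      exact hg.2 (Set.mem_univ a) (Set.mem_univ t) (by linarith) hs0.le (by ring)
    have hle : ψ a + g a ≤ ψ (a + s • d) + g (a + s • d) := hmin (Set.mem_univ _)
    rw [slope_def_field, sub_zero, le_div_iff₀ hs0]
    simp only [q, zero_smul, add_zero]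
    nlinarith
  have hlim : Tendsto (slope q 0) (𝓝[>] 0) (𝓝 ⟪G, d⟫) :=
    (hasDerivAt_iff_tendsto_slope.mp hq).mono_left (nhdsWithin_mono 0 fun s hs => ne_of_gt hs)
  have hGd : g a - g t ≤ ⟪G, d⟫ :=
    ge_of_tendsto hlim (eventually_of_mem (Ioc_mem_nhdsGT_of_mem ⟨le_rfl, zero_lt_one⟩) hslope)
  rw [inner_neg_left]
  linarith

theorem hasGradientAt_bregman {φ : E → ℝ} {T : E →L[ℝ] E} {a b : E}
    (hφa : DifferentiableAt ℝ φ a) (hφb : DifferentiableAt ℝ φ b) (hT : HasFDerivAt (∇ φ) T a) :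
    HasGradientAt (fun z : WithLp 2 (E × E) => Dphi φ z.snd z.fst)
      (WithLp.toLp 2 (-(ContinuousLinearMap.adjoint T) (b - a), ∇ φ b - ∇ φ a))
      (WithLp.toLp 2 (a, b)) := by
  set P : WithLp 2 (E × E) := WithLp.toLp 2 (a, b)
  have hfst : HasFDerivAt WithLp.fst (WithLp.fstL 2 ℝ E E) P := (WithLp.fstL 2 ℝ E E).hasFDerivAt
  have hsnd : HasFDerivAt WithLp.snd (WithLp.sndL 2 ℝ E E) P := (WithLp.sndL 2 ℝ E E).hasFDerivAt
  have h₁ := hφb.hasGradientAt.hasFDerivAt.comp P hsnd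
  have h₂ := hφa.hasGradientAt.hasFDerivAt.comp P hfst
  have h₃ := (hT.comp P hfst).inner ℝ (hsnd.sub hfst)
  refine ((h₁.sub h₂).sub h₃).congr_fderiv ?_
  ext v
  simp only [toDual_gradient, Function.comp_apply, WithLp.toLp_fst, Pi.sub_apply,
    WithLp.toLp_snd, sub_apply, ContinuousLinearMap.comp_apply,
    WithLp.sndL_apply, WithLp.fstL_apply, ContinuousLinearMap.prod_apply, fderivInnerCLM_apply,
    inner_sub_right, inner_gradient_left, map_sub, neg_sub, toDual_apply_apply,
    WithLp.prod_inner_apply, WithLp.ofLp_fst, inner_sub_left,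
    ContinuousLinearMap.adjoint_inner_left, WithLp.ofLp_snd, P]
  rw [real_inner_comm a, real_inner_comm b]
  ring

theorem mem_frechetSubdiff_add_bregman {f g h φ : E → ℝ} {T : E →L[ℝ] E} {a b w : E} (c : ℝ)
    (hf : DifferentiableAt ℝ f a) (hh : DifferentiableAt ℝ h a) (hφa : DifferentiableAt ℝ φ a)
    (hφb : DifferentiableAt ℝ φ b) (hT : HasFDerivAt (∇ φ) T a)
    (hw : ∀ t, g a + ⟪w, t - a⟫ ≤ g t) :
    WithLp.toLp 2 (∇ f a - ∇ h a - c • (ContinuousLinearMap.adjoint T) (b - a) + w,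
        c • (∇ φ b - ∇ φ a))
      ∈ FrechetSubdiff (fun z : WithLp 2 (E × E) =>
          f z.fst + g z.fst - h z.fst + c * Dphi φ z.snd z.fst) (WithLp.toLp 2 (a, b)) := by
  have hsmooth := ((hf.hasGradientAt.comp_fst (z := WithLp.toLp 2 (a, b))).sub
    (hh.hasGradientAt.comp_fst)).add ((hasGradientAt_bregman hφa hφb hT).const_mul c)
  have hg : WithLp.toLp 2 (w, 0) ∈ FrechetSubdiff (fun z : WithLp 2 (E × E) => g z.fst)
      (WithLp.toLp 2 (a, b)) :=
    mem_frechetSubdiff_of_forall_le fun z => by simpa using hw z.fst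
  have hsplit : (fun z : WithLp 2 (E × E) => f z.fst + g z.fst - h z.fst + c * Dphi φ z.snd z.fst)
      = (fun z => f z.fst - h z.fst + c * Dphi φ z.snd z.fst) + fun z => g z.fst := by
    funext z
    simp only [Pi.add_apply]
    ring
  rw [hsplit]
  convert add_mem_frechetSubdiff_add hsmooth.mem_frechetSubdiff hg using 1
  rw [WithLp.ext_iff]
  simp only [map_sub, neg_sub, WithLp.ofLp_add, WithLp.ofLp_sub, Prod.mk_sub_mk, sub_self,
    WithLp.ofLp_smul, Prod.smul_mk, Prod.mk_add_mk, zero_add, add_zero, Prod.mk.injEq,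
    add_left_inj, and_true]
  module

end Gradient

section Norms

variable {E F : Type*} [NormedAddCommGroup E] [NormedAddCommGroup F]

theorem WithLp.prod_norm_le_add (p : WithLp 2 (E × F)) : ‖p‖ ≤ ‖p.fst‖ + ‖p.snd‖ := by
  have := WithLp.prod_norm_sq_eq_of_L2 p
  nlinarith [norm_nonneg p, norm_nonneg p.fst, norm_nonneg p.snd]

theorem WithLp.add_le_sqrt_two_mul_prod_norm (p : WithLp 2 (E × F)) :
    ‖p.fst‖ + ‖p.snd‖ ≤ √2 * ‖p‖ := by
  have := WithLp.prod_norm_sq_eq_of_L2 p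
  have h2 : √2 ^ 2 = 2 := Real.sq_sqrt zero_le_two
  nlinarith [norm_nonneg p, norm_nonneg p.fst, norm_nonneg p.snd, Real.sqrt_nonneg 2,
    sq_nonneg (‖p.fst‖ - ‖p.snd‖), mul_nonneg (Real.sqrt_nonneg 2) (norm_nonneg p)]

theorem nonneg_of_norm_sub_le_mul_norm_sub {G : E → F} {K : ℝ} {a b : E} (hab : a ≠ b)
    (h : ‖G a - G b‖ ≤ K * ‖a - b‖) : 0 ≤ K :=
  (mul_nonneg_iff_of_pos_right (norm_pos_iff.2 (sub_ne_zero.2 hab))).mp ((norm_nonneg _).trans h)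

theorem norm_sub_extrapolation_le [NormedSpace ℝ E] (x₁ x₀ xₚ : E) {β : ℝ} (hβ₀ : 0 ≤ β)
    (hβ₁ : β ≤ 1) : ‖x₁ - (x₀ + β • (x₀ - xₚ))‖ ≤ ‖x₁ - x₀‖ + ‖x₀ - xₚ‖ := by
  calc ‖x₁ - (x₀ + β • (x₀ - xₚ))‖ = ‖(x₁ - x₀) - β • (x₀ - xₚ)‖ := by congr 1; abel
    _ ≤ ‖x₁ - x₀‖ + β * ‖x₀ - xₚ‖ := by
      refine (norm_sub_le _ _).trans ?_
      rw [norm_smul, Real.norm_of_nonneg hβ₀]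
    _ ≤ ‖x₁ - x₀‖ + ‖x₀ - xₚ‖ := by
      gcongr
      exact mul_le_of_le_one_left (norm_nonneg _) hβ₁

theorem norm_subgradient_le [InnerProductSpace ℝ E] [CompleteSpace E] {S : Set E}
    {Gf Gh Gφ : E → E} {T : E →L[ℝ] E} {L c β Lφ Lf Lh M : ℝ} (hL : 0 ≤ L) (hc : 0 ≤ c)
    (hβ₀ : 0 ≤ β) (hβ₁ : β ≤ 1)
    (hLipφ : ∀ a ∈ S, ∀ b ∈ S, ‖Gφ a - Gφ b‖ ≤ Lφ * ‖a - b‖)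
    (hLipf : ∀ a ∈ S, ∀ b ∈ S, ‖Gf a - Gf b‖ ≤ Lf * ‖a - b‖)
    (hLiph : ∀ a ∈ S, ∀ b ∈ S, ‖Gh a - Gh b‖ ≤ Lh * ‖a - b‖) (hM : ‖T‖ ≤ M)
    {x₁ x₀ xₚ y : E} (hx₁ : x₁ ∈ S) (hx₀ : x₀ ∈ S) (hxₚ : xₚ ∈ S) (hyS : y ∈ S)
    (hy : y = x₀ + β • (x₀ - xₚ)) :
    ‖WithLp.toLp 2 (Gf x₁ - Gh x₁ - c • (ContinuousLinearMap.adjoint T) (x₀ - x₁)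
          + (L • Gφ y - Gf y + Gh x₀ - L • Gφ x₁), c • (Gφ x₀ - Gφ x₁))‖
      ≤ √2 * (L * Lφ + Lf + Lh + c * (M + Lφ)) * ‖WithLp.toLp 2 (x₁ - x₀, x₀ - xₚ)‖ := by
  -- If `S` has at most one point, both sides vanish; otherwise the constants are nonnegative.
  rcases S.subsingleton_or_nontrivial with hS | ⟨p, hp, q, hq, hpq⟩
  · obtain rfl : y = x₁ := hS hyS hx₁
    obtain rfl : x₀ = y := hS hx₀ hyS
    obtain rfl : xₚ = x₀ := hS hxₚ hx₀
    simp only [sub_self, map_zero, smul_zero, sub_zero, WithLp.norm_toLp_fst, norm_zero, mul_zero,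
      norm_le_zero_iff]
    abel
  have hLf := nonneg_of_norm_sub_le_mul_norm_sub hpq (hLipf p hp q hq)
  have hLh := nonneg_of_norm_sub_le_mul_norm_sub hpq (hLiph p hp q hq)
  have hLφ := nonneg_of_norm_sub_le_mul_norm_sub hpq (hLipφ p hp q hq)
  have hM₀ : 0 ≤ M := (norm_nonneg T).trans hM
  set r := ‖x₁ - x₀‖ + ‖x₀ - xₚ‖
  have hy₁ : ‖x₁ - y‖ ≤ r := hy ▸ norm_sub_extrapolation_le x₁ x₀ xₚ hβ₀ hβ₁
  have hx₀₁ : ‖x₀ - x₁‖ ≤ r := by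
    rw [norm_sub_rev]; exact le_add_of_nonneg_right (norm_nonneg _)
  have hT : ‖(ContinuousLinearMap.adjoint T) (x₀ - x₁)‖ ≤ M * r := by
    refine ((ContinuousLinearMap.adjoint T).le_opNorm _).trans ?_
    rw [LinearIsometryEquiv.norm_map]
    gcongr
  have hfst : ‖Gf x₁ - Gh x₁ - c • (ContinuousLinearMap.adjoint T) (x₀ - x₁)
      + (L • Gφ y - Gf y + Gh x₀ - L • Gφ x₁)‖ ≤ (Lf + Lh + L * Lφ + c * M) * r := by
    rw [show Gf x₁ - Gh x₁ - c • (ContinuousLinearMap.adjoint T) (x₀ - x₁)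
        + (L • Gφ y - Gf y + Gh x₀ - L • Gφ x₁) = (Gf x₁ - Gf y) + (Gh x₀ - Gh x₁)
          + L • (Gφ y - Gφ x₁) - c • (ContinuousLinearMap.adjoint T) (x₀ - x₁) by module]
    refine (norm_sub_le _ _).trans ?_
    refine (add_le_add norm_add₃_le le_rfl).trans ?_
    rw [norm_smul, norm_smul, Real.norm_of_nonneg hL, Real.norm_of_nonneg hc]
    have hφy : ‖Gφ y - Gφ x₁‖ ≤ Lφ * r :=
      (hLipφ y hyS x₁ hx₁).trans (by rw [norm_sub_rev]; gcongr)
    have hfy := (hLipf x₁ hx₁ y hyS).trans (mul_le_mul_of_nonneg_left hy₁ hLf)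
    have hhx := (hLiph x₀ hx₀ x₁ hx₁).trans (mul_le_mul_of_nonneg_left hx₀₁ hLh)
    nlinarith [mul_le_mul_of_nonneg_left hφy hL, mul_le_mul_of_nonneg_left hT hc]
  have hsnd : ‖c • (Gφ x₀ - Gφ x₁)‖ ≤ c * Lφ * r := by
    rw [norm_smul, Real.norm_of_nonneg hc, mul_assoc]
    exact mul_le_mul_of_nonneg_left ((hLipφ x₀ hx₀ x₁ hx₁).trans (by gcongr)) hc
  have hr : r ≤ √2 * ‖WithLp.toLp 2 (x₁ - x₀, x₀ - xₚ)‖ :=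
    WithLp.add_le_sqrt_two_mul_prod_norm (WithLp.toLp 2 (x₁ - x₀, x₀ - xₚ))
  have hκ : 0 ≤ L * Lφ + Lf + Lh + c * (M + Lφ) := by positivity
  calc _ ≤ _ := WithLp.prod_norm_le_add _
    _ ≤ (L * Lφ + Lf + Lh + c * (M + Lφ)) * r := by
      simp only [WithLp.toLp_fst, WithLp.toLp_snd]
      linarith
    _ ≤ (L * Lφ + Lf + Lh + c * (M + Lφ)) * (√2 * ‖WithLp.toLp 2 (x₁ - x₀, x₀ - xₚ)‖) :=
      mul_le_mul_of_nonneg_left hr hκ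
    _ = _ := by ring

end Norms

theorem stmt16_general {E : Type*} [NormedAddCommGroup E] [InnerProductSpace ℝ E]
    [FiniteDimensional ℝ E]
    (f g h φ : E → ℝ) (L δ : ℝ) (hL : 0 < L)
    (hδ : δ ∈ Set.Ioo (0 : ℝ) 1)
    (hf : ContDiff ℝ 1 f) (hφ : ContDiff ℝ 2 φ) (hhd : ContDiff ℝ 1 h)
    (hg : ConvexOn ℝ Set.univ g)
    (S : Set E)
    (Lφ' Lf Lh M : ℝ)
    (hLipφ : ∀ a ∈ S, ∀ b ∈ S, ‖gradient φ a - gradient φ b‖ ≤ Lφ' * ‖a - b‖)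
    (hLipf : ∀ a ∈ S, ∀ b ∈ S, ‖gradient f a - gradient f b‖ ≤ Lf * ‖a - b‖)
    (hLiph : ∀ a ∈ S, ∀ b ∈ S, ‖gradient h a - gradient h b‖ ≤ Lh * ‖a - b‖)
    (hM : ∀ a ∈ S, ‖fderiv ℝ (gradient φ) a‖ ≤ M)
    (x y : ℕ → E) (β : ℕ → ℝ) (hβ : ∀ k, 0 ≤ β k ∧ β k ≤ 1)
    (hxS : ∀ k, x k ∈ S) (hyS : ∀ k, y k ∈ S)
    (hy : ∀ k, y k = x k + β k • (x k - x (k - 1)))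
    (hmin : ∀ k, ∀ z : E,
      L * φ (x (k + 1)) + g (x (k + 1))
          - (inner ℝ (L • gradient φ (y k) - gradient f (y k) + gradient h (x k))
              (x (k + 1)) : ℝ)
        ≤ L * φ z + g z
          - (inner ℝ (L • gradient φ (y k) - gradient f (y k) + gradient h (x k)) z : ℝ))
    (Φ : WithLp 2 (E × E) → ℝ)
    (hΦ : Φ = fun z =>
      (f (WithLp.equiv 2 (E × E) z).1 + g (WithLp.equiv 2 (E × E) z).1
        - h (WithLp.equiv 2 (E × E) z).1)
      + (1 + δ) * L / 2 * Dphi φ (WithLp.equiv 2 (E × E) z).2 (WithLp.equiv 2 (E × E) z).1)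
    (zseq : ℕ → WithLp 2 (E × E))
    (hz : ∀ k, zseq k = (WithLp.equiv 2 (E × E)).symm (x k, x (k - 1))) :
    ∀ k : ℕ,
      Metric.infDist (0 : WithLp 2 (E × E)) (LimitingSubdiff Φ (zseq (k + 1)))
        ≤ Real.sqrt 2 * (L * Lφ' + Lf + Lh + (1 + δ) * L * (M + Lφ') / 2)
            * ‖zseq (k + 1) - zseq k‖ := by
  intro k
  have hφd : Differentiable ℝ φ := hφ.differentiable (by norm_num)
  have hmink := hmin k
  set A := L • ∇ φ (y k) - ∇ f (y k) + ∇ h (x k)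
  have hsubgrad : ∀ t, g (x (k + 1)) + ⟪A - L • ∇ φ (x (k + 1)), t - x (k + 1)⟫ ≤ g t := by
    have hψ := ((hφd (x (k + 1))).hasGradientAt.const_mul L).sub
      (hasGradientAt_inner_const_left A _)
    simpa using hg.add_inner_le_of_isMinOn_add hψ (isMinOn_univ_iff.mpr fun t => by
      simp only [Pi.add_apply]; linarith [hmink t])
  have hmem := mem_frechetSubdiff_add_bregman ((1 + δ) * L / 2) (hf.differentiable one_ne_zero _)
    (hhd.differentiable one_ne_zero _) (hφd _) (hφd (x k))
    (hφ.differentiable_gradient (x (k + 1))).hasFDerivAt hsubgrad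
  have hc : 0 ≤ (1 + δ) * L / 2 := by have := hδ.1; positivity
  have hbound := norm_subgradient_le hL.le hc (hβ k).1 (hβ k).2 hLipφ hLipf hLiph
    (hM _ (hxS (k + 1))) (hxS (k + 1)) (hxS k) (hxS (k - 1)) (hyS k) (hy k)
  have hz₁ : zseq (k + 1) = WithLp.toLp 2 (x (k + 1), x k) := hz (k + 1)
  have hΔ : zseq (k + 1) - zseq k = WithLp.toLp 2 (x (k + 1) - x k, x k - x (k - 1)) := by
    rw [hz, hz]; rfl
  subst hΦ
  rw [hΔ, hz₁]
  refine (infDist_zero_limitingSubdiff_le hmem).trans (hbound.trans_eq ?_)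
  ring

theorem stmt16 {E : Type*} [NormedAddCommGroup E] [InnerProductSpace ℝ E]
    [FiniteDimensional ℝ E]
    (f g h φ : E → ℝ) (L l ρ δ : ℝ) (hL : 0 < L) (hl : 0 ≤ l) (hρ : 0 < ρ)
    (hδ : δ ∈ Set.Ioo (0 : ℝ) 1)
    (hf : ContDiff ℝ 1 f) (hφ : ContDiff ℝ 2 φ) (hhd : ContDiff ℝ 1 h)
    (hφsc : ConvexOn ℝ Set.univ (fun x => φ x - ρ / 2 * ‖x‖ ^ 2))
    (hg : ConvexOn ℝ Set.univ g) (hglsc : LowerSemicontinuous g)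
    (hh : ConvexOn ℝ Set.univ h)
    (S : Set E) (hS : Bornology.IsBounded S)
    (Lφ' Lf Lh M : ℝ)
    (hLipφ : ∀ a ∈ S, ∀ b ∈ S, ‖gradient φ a - gradient φ b‖ ≤ Lφ' * ‖a - b‖)
    (hLipf : ∀ a ∈ S, ∀ b ∈ S, ‖gradient f a - gradient f b‖ ≤ Lf * ‖a - b‖)
    (hLiph : ∀ a ∈ S, ∀ b ∈ S, ‖gradient h a - gradient h b‖ ≤ Lh * ‖a - b‖)
    (hM : ∀ a ∈ S, ‖fderiv ℝ (gradient φ) a‖ ≤ M)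
    (x y : ℕ → E) (β : ℕ → ℝ) (hβ : ∀ k, 0 ≤ β k ∧ β k ≤ 1)
    (hxS : ∀ k, x k ∈ S) (hyS : ∀ k, y k ∈ S)
    (hy : ∀ k, y k = x k + β k • (x k - x (k - 1)))
    (hmin : ∀ k, ∀ z : E,
      L * φ (x (k + 1)) + g (x (k + 1))
          - (inner ℝ (L • gradient φ (y k) - gradient f (y k) + gradient h (x k))
              (x (k + 1)) : ℝ)
        ≤ L * φ z + g z
          - (inner ℝ (L • gradient φ (y k) - gradient f (y k) + gradient h (x k)) z : ℝ))
    (Φ : WithLp 2 (E × E) → ℝ)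
    (hΦ : Φ = fun z =>
      (f (WithLp.equiv 2 (E × E) z).1 + g (WithLp.equiv 2 (E × E) z).1
        - h (WithLp.equiv 2 (E × E) z).1)
      + (1 + δ) * L / 2 * Dphi φ (WithLp.equiv 2 (E × E) z).2 (WithLp.equiv 2 (E × E) z).1)
    (zseq : ℕ → WithLp 2 (E × E))
    (hz : ∀ k, zseq k = (WithLp.equiv 2 (E × E)).symm (x k, x (k - 1))) :
    ∀ k : ℕ,
      Metric.infDist (0 : WithLp 2 (E × E)) (LimitingSubdiff Φ (zseq (k + 1)))
        ≤ Real.sqrt 2 * (L * Lφ' + Lf + Lh + (1 + δ) * L * (M + Lφ') / 2)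
            * ‖zseq (k + 1) - zseq k‖ :=
  stmt16_general f g h φ L δ hL hδ hf hφ hhd hg S Lφ' Lf Lh M hLipφ hLipf hLiph hM x y β hβ hxS hyS
    hy hmin Φ hΦ zseq hz
end

section
/- Let f(U,V) = ½‖P(A − UV)‖_F² be the masked matrix-factorization loss and φ(U,V) = 3·((‖U‖_F² + ‖V‖_F²)/2)² + c₂·((‖U‖_F² + ‖V‖_F²)/2) with c₂ = ‖P(A)‖_F. Then Lφ − f and Lφ + f are convex for every L ≥ 1. -/
/-!
Convexity is checked on lines `τ ↦ w + τ • d`, through second derivatives. Writing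
`B U V = P (U * V)`, which satisfies `‖B U V‖ ≤ ‖U‖ ‖V‖` (Frobenius submultiplicativity; masking
only drops entries), the second derivative of `f` at `w = (U, V)` in direction `d = (H, K)` is
`‖B U K + B H V‖² - 2 ⟪P A - B U V, B H K⟫`. Cauchy–Schwarz bounds its absolute value by
`(3/2) ‖w‖² ‖d‖² + ‖P A‖ ‖d‖²`, which is dominated by the second derivative
`6 ⟪w, d⟫² + (3 ‖w‖² + c₂) ‖d‖²` of `φ`. Hence `L φ'' ± f'' ≥ (L - 1) φ'' ≥ 0`.
-/

open Set
open scoped RealInnerProductSpace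

theorem hasDerivAt_add_smul {𝕜 E : Type*} [NontriviallyNormedField 𝕜] [NormedAddCommGroup E]
    [NormedSpace 𝕜 E] (x v : E) (τ : 𝕜) : HasDerivAt (fun τ : 𝕜 => x + τ • v) v τ := by
  simpa using ((hasDerivAt_id τ).smul_const v).const_add x

theorem convexOn_univ_of_hasDerivAt_line {E : Type*} [AddCommGroup E] [Module ℝ E]
    {G : E → ℝ} (G' G'' : E → E → ℝ)
    (hG' : ∀ x d τ, HasDerivAt (fun τ : ℝ => G (x + τ • d)) (G' (x + τ • d) d) τ)
    (hG'' : ∀ x d τ, HasDerivAt (fun τ : ℝ => G' (x + τ • d) d) (G'' (x + τ • d) d) τ)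
    (h : ∀ x d, 0 ≤ G'' x d) : ConvexOn ℝ univ G := by
  refine ⟨convex_univ, fun x _ y _ a b ha hb hab => ?_⟩
  have hline : ConvexOn ℝ univ fun τ : ℝ => G (x + τ • (y - x)) :=
    convexOn_of_hasDerivWithinAt2_nonneg convex_univ
      (continuous_iff_continuousAt.2 fun τ => (hG' x (y - x) τ).continuousAt).continuousOn
      (fun τ _ => (hG' x (y - x) τ).hasDerivWithinAt)
      (fun τ _ => (hG'' x (y - x) τ).hasDerivWithinAt) fun τ _ => h _ _
  have hpoint : x + b • (y - x) = a • x + b • y := by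
    obtain rfl : a = 1 - b := by linarith
    module
  simpa [hpoint] using hline.2 (mem_univ 0) (mem_univ 1) ha hb hab

noncomputable section BilinearFactorization

variable {E₁ E₂ F : Type*} [NormedAddCommGroup E₁] [InnerProductSpace ℝ E₁]
  [NormedAddCommGroup E₂] [InnerProductSpace ℝ E₂] [NormedAddCommGroup F] [InnerProductSpace ℝ F]

def pairNormSq (w : E₁ × E₂) : ℝ := ‖w.1‖ ^ 2 + ‖w.2‖ ^ 2

def pairInner (w d : E₁ × E₂) : ℝ := ⟪w.1, d.1⟫ + ⟪w.2, d.2⟫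

theorem hasDerivAt_pairNormSq_line (w d : E₁ × E₂) (τ : ℝ) :
    HasDerivAt (fun τ : ℝ => pairNormSq (w + τ • d)) (2 * pairInner (w + τ • d) d) τ := by
  refine ((hasDerivAt_add_smul w.1 d.1 τ).norm_sq.add
    (hasDerivAt_add_smul w.2 d.2 τ).norm_sq).congr_deriv ?_
  simp only [pairInner, Prod.fst_add, Prod.snd_add, Prod.smul_fst, Prod.smul_snd]
  ring

theorem hasDerivAt_pairInner_line (w d : E₁ × E₂) (τ : ℝ) :
    HasDerivAt (fun τ : ℝ => pairInner (w + τ • d) d) (pairNormSq d) τ := by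
  refine (((hasDerivAt_add_smul w.1 d.1 τ).inner ℝ (hasDerivAt_const τ d.1)).add
    ((hasDerivAt_add_smul w.2 d.2 τ).inner ℝ (hasDerivAt_const τ d.2))).congr_deriv ?_
  simp [pairNormSq]

def quarticKernel (c : ℝ) (w : E₁ × E₂) : ℝ :=
  3 * (pairNormSq w / 2) ^ 2 + c * (pairNormSq w / 2)

def quarticKernelDeriv (c : ℝ) (w d : E₁ × E₂) : ℝ := (3 * pairNormSq w + c) * pairInner w d

def quarticKernelHess (c : ℝ) (w d : E₁ × E₂) : ℝ :=
  6 * pairInner w d ^ 2 + (3 * pairNormSq w + c) * pairNormSq d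

theorem hasDerivAt_quarticKernel_line (c : ℝ) (w d : E₁ × E₂) (τ : ℝ) :
    HasDerivAt (fun τ : ℝ => quarticKernel c (w + τ • d))
      (quarticKernelDeriv c (w + τ • d) d) τ := by
  have hN := hasDerivAt_pairNormSq_line w d τ
  refine ((((hN.div_const 2).pow 2).const_mul 3).add
    ((hN.div_const 2).const_mul c)).congr_deriv ?_
  simp only [quarticKernelDeriv, Nat.cast_ofNat]
  ring

theorem hasDerivAt_quarticKernel_deriv_line (c : ℝ) (w d : E₁ × E₂) (τ : ℝ) :
    HasDerivAt (fun τ : ℝ => quarticKernelDeriv c (w + τ • d) d)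
      (quarticKernelHess c (w + τ • d) d) τ := by
  refine ((((hasDerivAt_pairNormSq_line w d τ).const_mul 3).add_const c).mul
    (hasDerivAt_pairInner_line w d τ)).congr_deriv ?_
  rw [quarticKernelHess]
  ring

def factorizationLoss (B : E₁ →L[ℝ] E₂ →L[ℝ] F) (a : F) (w : E₁ × E₂) : ℝ :=
  ‖a - B w.1 w.2‖ ^ 2 / 2

def factorizationLossDeriv (B : E₁ →L[ℝ] E₂ →L[ℝ] F) (a : F) (w d : E₁ × E₂) : ℝ :=
  -⟪a - B w.1 w.2, B w.1 d.2 + B d.1 w.2⟫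

def factorizationLossHess (B : E₁ →L[ℝ] E₂ →L[ℝ] F) (a : F) (w d : E₁ × E₂) : ℝ :=
  ‖B w.1 d.2 + B d.1 w.2‖ ^ 2 - 2 * ⟪a - B w.1 w.2, B d.1 d.2⟫

variable (B : E₁ →L[ℝ] E₂ →L[ℝ] F) (a : F)

theorem hasDerivAt_factorizationLoss_line (w d : E₁ × E₂) (τ : ℝ) :
    HasDerivAt (fun τ : ℝ => factorizationLoss B a (w + τ • d))
      (factorizationLossDeriv B a (w + τ • d) d) τ := by
  have hB := B.hasDerivAt_of_bilinear (fun _ => hasDerivAt_add_smul w.1 d.1 τ)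
    (fun _ => hasDerivAt_add_smul w.2 d.2 τ)
  refine (((hB.const_sub a).norm_sq).div_const 2).congr_deriv ?_
  simp only [factorizationLossDeriv, inner_neg_right, Prod.fst_add, Prod.snd_add, Prod.smul_fst,
    Prod.smul_snd]
  ring

theorem hasDerivAt_factorizationLoss_deriv_line (w d : E₁ × E₂) (τ : ℝ) :
    HasDerivAt (fun τ : ℝ => factorizationLossDeriv B a (w + τ • d) d)
      (factorizationLossHess B a (w + τ • d) d) τ := by
  have hx₁ := hasDerivAt_add_smul w.1 d.1 τ
  have hx₂ := hasDerivAt_add_smul w.2 d.2 τ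
  have hr := (B.hasDerivAt_of_bilinear (fun _ => hx₁) (fun _ => hx₂)).const_sub a
  have hD := (B.hasDerivAt_of_bilinear (fun _ => hx₁) (fun _ => hasDerivAt_const τ d.2)).add
    (B.hasDerivAt_of_bilinear (fun _ => hasDerivAt_const τ d.1) (fun _ => hx₂))
  refine (hr.inner ℝ hD).neg.congr_deriv ?_
  simp only [factorizationLossHess, Prod.fst_add, Prod.snd_add, Prod.smul_fst, Prod.smul_snd,
    map_zero, zero_apply, zero_add, add_zero, Pi.add_apply, inner_neg_left,
    real_inner_self_eq_norm_sq]
  rw [inner_add_right]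
  ring

theorem abs_factorizationLossHess_le (hB : ∀ x y, ‖B x y‖ ≤ ‖x‖ * ‖y‖) {c : ℝ} (hc : ‖a‖ ≤ c)
    (w d : E₁ × E₂) : |factorizationLossHess B a w d| ≤ quarticKernelHess c w d := by
  have hc₀ : 0 ≤ c := (norm_nonneg a).trans hc
  have hD : ‖B w.1 d.2 + B d.1 w.2‖ ^ 2 ≤ pairNormSq w * pairNormSq d := by
    have hle : ‖B w.1 d.2 + B d.1 w.2‖ ≤ ‖w.1‖ * ‖d.2‖ + ‖d.1‖ * ‖w.2‖ :=
      (norm_add_le _ _).trans (add_le_add (hB _ _) (hB _ _))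
    calc _ ≤ (‖w.1‖ * ‖d.2‖ + ‖d.1‖ * ‖w.2‖) ^ 2 := pow_le_pow_left₀ (norm_nonneg _) hle 2
      _ ≤ _ := by
        rw [pairNormSq, pairNormSq]
        nlinarith [sq_nonneg (‖w.1‖ * ‖d.1‖ - ‖w.2‖ * ‖d.2‖)]
  have hR : 2 * |⟪a - B w.1 w.2, B d.1 d.2⟫| ≤ (c + pairNormSq w / 2) * pairNormSq d := by
    have hres : ‖a - B w.1 w.2‖ ≤ c + ‖w.1‖ * ‖w.2‖ :=
      (norm_sub_le _ _).trans (add_le_add hc (hB _ _))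
    calc 2 * |⟪a - B w.1 w.2, B d.1 d.2⟫|
        ≤ 2 * ((c + ‖w.1‖ * ‖w.2‖) * (‖d.1‖ * ‖d.2‖)) := by
          gcongr
          exact (abs_real_inner_le_norm _ _).trans (mul_le_mul hres (hB _ _) (norm_nonneg _)
            (by positivity))
      _ = (c + ‖w.1‖ * ‖w.2‖) * (2 * ‖d.1‖ * ‖d.2‖) := by ring
      _ ≤ _ := by
        rw [pairNormSq, pairNormSq]
        gcongr
        · nlinarith [sq_nonneg (‖w.1‖ - ‖w.2‖)]
        · nlinarith [sq_nonneg (‖d.1‖ - ‖d.2‖)]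
  have hNw : 0 ≤ pairNormSq w := by unfold pairNormSq; positivity
  have hNd : 0 ≤ pairNormSq d := by unfold pairNormSq; positivity
  rw [factorizationLossHess, quarticKernelHess, abs_le]
  constructor <;>
    nlinarith [abs_nonneg ⟪a - B w.1 w.2, B d.1 d.2⟫, le_abs_self ⟪a - B w.1 w.2, B d.1 d.2⟫,
      neg_abs_le ⟪a - B w.1 w.2, B d.1 d.2⟫, sq_nonneg (pairInner w d),
      sq_nonneg ‖B w.1 d.2 + B d.1 w.2‖, mul_nonneg hNw hNd]

theorem convexOn_quarticKernel_add_factorizationLoss (hB : ∀ x y, ‖B x y‖ ≤ ‖x‖ * ‖y‖)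
    {c L ε : ℝ} (hc : ‖a‖ ≤ c) (hε : |ε| ≤ L) :
    ConvexOn ℝ univ fun w => L * quarticKernel c w + ε * factorizationLoss B a w := by
  refine convexOn_univ_of_hasDerivAt_line
    (fun w d => L * quarticKernelDeriv c w d + ε * factorizationLossDeriv B a w d)
    (fun w d => L * quarticKernelHess c w d + ε * factorizationLossHess B a w d)
    (fun w d τ => ((hasDerivAt_quarticKernel_line c w d τ).const_mul L).add
      ((hasDerivAt_factorizationLoss_line B a w d τ).const_mul ε))
    (fun w d τ => ((hasDerivAt_quarticKernel_deriv_line c w d τ).const_mul L).add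
      ((hasDerivAt_factorizationLoss_deriv_line B a w d τ).const_mul ε)) fun w d => ?_
  have hbound := abs_factorizationLossHess_le B a hB hc w d
  have hkernel := (abs_nonneg _).trans hbound
  calc 0 ≤ (L - |ε|) * quarticKernelHess c w d := mul_nonneg (by linarith) hkernel
    _ ≤ L * quarticKernelHess c w d - |ε * factorizationLossHess B a w d| := by
      rw [abs_mul]; nlinarith [mul_le_mul_of_nonneg_left hbound (abs_nonneg ε)]
    _ ≤ _ := by linarith [neg_abs_le (ε * factorizationLossHess B a w d)]

end BilinearFactorization

namespace Matrix

variable {ι κ ν : Type*}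

def toEuclideanSpace : Matrix ι κ ℝ ≃ₗ[ℝ] EuclideanSpace ℝ (ι × κ) where
  toFun A := WithLp.toLp 2 fun p => A p.1 p.2
  invFun x := of fun i j => x (i, j)
  map_add' _ _ := rfl
  map_smul' _ _ := rfl
  left_inv _ := rfl
  right_inv _ := rfl

@[simp]
theorem toEuclideanSpace_apply (A : Matrix ι κ ℝ) (p : ι × κ) :
    toEuclideanSpace A p = A p.1 p.2 := rfl

variable [Fintype ι] [Fintype κ] [Fintype ν]

theorem norm_toEuclideanSpace_sq (A : Matrix ι κ ℝ) :
    ‖toEuclideanSpace A‖ ^ 2 = ∑ i, ∑ j, A i j ^ 2 := by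
  simp [EuclideanSpace.norm_sq_eq, Fintype.sum_prod_type]

section Frobenius

attribute [local instance] frobeniusNormedAddCommGroup

theorem frobenius_norm_eq_norm_toEuclideanSpace (A : Matrix ι κ ℝ) :
    ‖A‖ = ‖toEuclideanSpace A‖ := by
  rw [frobenius_norm_def, EuclideanSpace.norm_eq, Real.sqrt_eq_rpow, Fintype.sum_prod_type]
  simp

theorem norm_toEuclideanSpace_mul_le (A : Matrix ι ν ℝ) (B : Matrix ν κ ℝ) :
    ‖toEuclideanSpace (A * B)‖ ≤ ‖toEuclideanSpace A‖ * ‖toEuclideanSpace B‖ := by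
  simpa only [frobenius_norm_eq_norm_toEuclideanSpace] using frobenius_norm_mul A B

end Frobenius

variable [DecidableEq ι] [DecidableEq κ]

def maskLinearMap (Ω : Finset (ι × κ)) : Matrix ι κ ℝ →ₗ[ℝ] Matrix ι κ ℝ where
  toFun Z := of fun i j => if (i, j) ∈ Ω then Z i j else 0
  map_add' Y Z := by ext i j; by_cases h : (i, j) ∈ Ω <;> simp [h]
  map_smul' r Z := by ext i j; by_cases h : (i, j) ∈ Ω <;> simp [h]

theorem norm_toEuclideanSpace_mask_mul_le (Ω : Finset (ι × κ)) (U : Matrix ι ν ℝ)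
    (V : Matrix ν κ ℝ) :
    ‖toEuclideanSpace (maskLinearMap Ω (U * V))‖ ≤
      ‖toEuclideanSpace U‖ * ‖toEuclideanSpace V‖ := by
  refine le_trans ?_ (norm_toEuclideanSpace_mul_le U V)
  rw [← sq_le_sq₀ (norm_nonneg _) (norm_nonneg _), norm_toEuclideanSpace_sq,
    norm_toEuclideanSpace_sq]
  refine Finset.sum_le_sum fun i _ => Finset.sum_le_sum fun j _ => ?_
  by_cases h : (i, j) ∈ Ω <;> simp [maskLinearMap, h, sq_nonneg]

noncomputable def maskedMul (Ω : Finset (ι × κ)) :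
    EuclideanSpace ℝ (ι × ν) →L[ℝ] EuclideanSpace ℝ (ν × κ) →L[ℝ] EuclideanSpace ℝ (ι × κ) :=
  (((mulLinearMap ℝ).compl₁₂ toEuclideanSpace.symm.toLinearMap
    toEuclideanSpace.symm.toLinearMap).compr₂
      (toEuclideanSpace.toLinearMap ∘ₗ maskLinearMap Ω)).mkContinuous₂ 1 fun x y => by
    obtain ⟨U, rfl⟩ := toEuclideanSpace.surjective x
    obtain ⟨V, rfl⟩ := toEuclideanSpace.surjective y
    simpa [mul_assoc] using norm_toEuclideanSpace_mask_mul_le Ω U V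

theorem maskedMul_apply (Ω : Finset (ι × κ)) (U : Matrix ι ν ℝ) (V : Matrix ν κ ℝ) :
    maskedMul Ω (toEuclideanSpace U) (toEuclideanSpace V) =
      toEuclideanSpace (maskLinearMap Ω (U * V)) := by
  simp [maskedMul]

theorem norm_maskedMul_le (Ω : Finset (ι × κ)) (x : EuclideanSpace ℝ (ι × ν))
    (y : EuclideanSpace ℝ (ν × κ)) : ‖maskedMul Ω x y‖ ≤ ‖x‖ * ‖y‖ := by
  obtain ⟨U, rfl⟩ := toEuclideanSpace.surjective x
  obtain ⟨V, rfl⟩ := toEuclideanSpace.surjective y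
  rw [maskedMul_apply]
  exact norm_toEuclideanSpace_mask_mul_le Ω U V

end Matrix

open Finset

theorem stmt19 {m n t : ℕ} (Ω : Finset (Fin m × Fin n)) (A : Matrix (Fin m) (Fin n) ℝ)
    (L : ℝ) (hL : 1 ≤ L)
    (P : Matrix (Fin m) (Fin n) ℝ → Matrix (Fin m) (Fin n) ℝ)
    (hP : P = fun Z => Matrix.of fun i j => if (i, j) ∈ Ω then Z i j else 0)
    (f : Matrix (Fin m) (Fin t) ℝ × Matrix (Fin t) (Fin n) ℝ → ℝ)
    (hf : f = fun w => (1 / 2) * ∑ i, ∑ j, (P (A - w.1 * w.2) i j) ^ 2)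
    (c₂ : ℝ) (hc₂ : c₂ = Real.sqrt (∑ i, ∑ j, (P A i j) ^ 2))
    (φ : Matrix (Fin m) (Fin t) ℝ × Matrix (Fin t) (Fin n) ℝ → ℝ)
    (hφ : φ = fun w =>
      3 * (((∑ i, ∑ j, (w.1 i j) ^ 2) + ∑ i, ∑ j, (w.2 i j) ^ 2) / 2) ^ 2
        + c₂ * (((∑ i, ∑ j, (w.1 i j) ^ 2) + ∑ i, ∑ j, (w.2 i j) ^ 2) / 2)) :
    ConvexOn ℝ Set.univ (fun w => L * φ w - f w) ∧
    ConvexOn ℝ Set.univ (fun w => L * φ w + f w) := by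
  set a := Matrix.toEuclideanSpace (Matrix.maskLinearMap Ω A)
  have hPmask : P = Matrix.maskLinearMap Ω := hP
  have hc : ‖a‖ ≤ c₂ := by
    rw [hc₂, hPmask, ← Matrix.norm_toEuclideanSpace_sq, Real.sqrt_sq (norm_nonneg _)]
  have hφ' : φ = fun w =>
      quarticKernel c₂ (Matrix.toEuclideanSpace w.1, Matrix.toEuclideanSpace w.2) := by
    simp only [hφ, quarticKernel, pairNormSq, Matrix.norm_toEuclideanSpace_sq]
  have hf' : f = fun w => factorizationLoss (Matrix.maskedMul Ω) a
      (Matrix.toEuclideanSpace w.1, Matrix.toEuclideanSpace w.2) := by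
    funext w
    rw [hf, factorizationLoss, Matrix.maskedMul_apply, ← map_sub, ← map_sub,
      Matrix.norm_toEuclideanSpace_sq, hPmask]
    ring
  have key : ∀ ε, |ε| ≤ L → ConvexOn ℝ Set.univ fun w => L * φ w + ε * f w := fun ε hε => by
    have h := (convexOn_quarticKernel_add_factorizationLoss (Matrix.maskedMul (ν := Fin t) Ω) a
      (Matrix.norm_maskedMul_le Ω) hc hε).comp_linearMap
        (Matrix.toEuclideanSpace.toLinearMap.prodMap Matrix.toEuclideanSpace.toLinearMap)
    simp only [Set.preimage_univ, Function.comp_def, LinearMap.prodMap_apply,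
      LinearEquiv.coe_coe] at h
    rw [hφ', hf']
    exact h
  constructor
  · simpa only [sub_eq_add_neg, neg_one_mul] using key (-1) (by rwa [abs_neg, abs_one])
  · simpa only [one_mul] using key 1 (by rwa [abs_one])
end
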